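/- Let G be a k-chordal simple graph (k ≥ 3), let n ≥ k + 1, and let x₁, x₂, …, x_n be pairwise distinct vertices forming a cycle in G (x_i adjacent to x_{i+1} for 1 ≤ i < n, and x_n adjacent to x₁). Suppose no chord of this cycle has an endpoint in {x₂, …, x_{k−1}}: whenever x_i and x_j are adjacent in G but are not cyclically consecutive in the cycle, neither i nor j lies in {2, …, k−1}. Then x₁ and x_k are adjacent in G. -/

import Mathlib

/-- A graph is `k`-chordal if it has no induced cycle of length greater than `k`. -/
def IsKChordal {V : Type*} (G : SimpleGraph V) (k : ℕ) : Prop :=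
  ∀ m : ℕ, 3 ≤ m → k < m → IsEmpty (SimpleGraph.cycleGraph m ↪g G)

/-!
Induction on the length `n` of the cycle. A chordless cycle of length `n > k` would be an induced
cycle, so there is a chord `x a — x c` with `a < c`; by hypothesis neither endpoint lies in
`{1, …, k - 2}`. If it is `x 0 — x (k - 1)` we are done. Otherwise short-cutting along the chord the
arc that avoids `x 0, …, x (k - 1)` (the arc `c + 1, …, n - 1` when `a = 0`, the arc
`a + 1, …, c - 1` when `a ≥ k - 1`) leaves a shorter cycle, still longer than `k`, that starts
with `x 0, …, x (k - 1)`; its chords are chords of the original cycle, so induction applies.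
-/

namespace Fin

theorem val_add_one_eq_ite {n : ℕ} [NeZero n] (i : Fin n) :
    (i + 1).val = if i.val + 1 = n then 0 else i.val + 1 := by
  obtain ⟨n, rfl⟩ : ∃ m, n = m + 1 := Nat.exists_eq_add_one.2 (NeZero.pos n)
  rw [Fin.val_add_one]
  split_ifs with h <;> simp [Fin.ext_iff] at h <;> omega

theorem eq_add_one_iff_val {n : ℕ} [NeZero n] {i j : Fin n} :
    j = i + 1 ↔ j.val = i.val + 1 ∨ i.val + 1 = n ∧ j.val = 0 := by
  rw [Fin.ext_iff, val_add_one_eq_ite]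
  split_ifs <;> omega

/-- The increasing enumeration of `{0, …, a} ∪ {c, …, n - 1}`. -/
def skipArc {n : ℕ} (a c : ℕ) (hac : a < c) (hcn : c ≤ n) : Fin (n - c + a + 1) → Fin n :=
  fun t => ⟨if t.val ≤ a then t.val else t.val + (c - a - 1), by split_ifs <;> omega⟩

variable {n a c : ℕ} {hac : a < c} {hcn : c ≤ n}

theorem val_skipArc (t : Fin (n - c + a + 1)) :
    (skipArc a c hac hcn t).val = if t.val ≤ a then t.val else t.val + (c - a - 1) := rfl

theorem skipArc_injective : Function.Injective (skipArc a c hac hcn) := by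
  intro s t h
  rw [Fin.ext_iff, val_skipArc, val_skipArc] at h
  ext
  split_ifs at h <;> omega

end Fin

namespace SimpleGraph

variable {V : Type*} {G : SimpleGraph V} {n : ℕ} [NeZero n] {x : Fin n → V}

variable (G) in
def IsChord (x : Fin n → V) (i j : Fin n) : Prop :=
  G.Adj (x i) (x j) ∧ j ≠ i + 1 ∧ i ≠ j + 1

theorem IsChord.symm {i j : Fin n} (h : G.IsChord x i j) : G.IsChord x j i :=
  ⟨h.1.symm, h.2.2, h.2.1⟩

theorem adj_of_val_eq_succ (hcyc : ∀ i, G.Adj (x i) (x (i + 1))) {i j : Fin n}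
    (h : j.val = i.val + 1 ∨ i.val + 1 = n ∧ j.val = 0) : G.Adj (x i) (x j) := by
  obtain rfl := Fin.eq_add_one_iff_val.2 h
  exact hcyc i

theorem adj_comp_skipArc {a c : ℕ} {hac : a < c} {hcn : c ≤ n}
    (hcyc : ∀ i, G.Adj (x i) (x (i + 1))) (hchord : G.Adj (x (Fin.ofNat n a)) (x (Fin.ofNat n c)))
    (t : Fin (n - c + a + 1)) :
    G.Adj (x (Fin.skipArc a c hac hcn t)) (x (Fin.skipArc a c hac hcn (t + 1))) := by
  have ht := Fin.val_add_one_eq_ite t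
  by_cases hta : t.val = a
  · have hc : c % n = if c = n then 0 else c := by
      split_ifs with h
      · simp [h]
      · exact Nat.mod_eq_of_lt (by omega)
    convert hchord using 2 <;> ext <;>
      simp only [Fin.val_skipArc, Fin.val_ofNat, ht, hc, Nat.mod_eq_of_lt (show a < n by omega)] <;>
      split_ifs <;> omega
  · apply adj_of_val_eq_succ hcyc
    simp only [Fin.val_skipArc, ht]
    split_ifs <;> omega

theorem IsChord.of_comp {m : ℕ} [NeZero m] {φ : Fin m → Fin n} (hφ : Function.Injective φ)
    {s t : Fin m} (h : G.IsChord (x ∘ φ) s t) (hs : 0 < s.val) (hsm : s.val + 1 < m)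
    (hfix : ∀ u : Fin m, u.val ≤ s.val + 1 → (φ u).val = u.val) :
    G.IsChord x (φ s) (φ t) := by
  obtain ⟨hadj, hts, hst⟩ := h
  have hs' := hfix s (by omega)
  have hprev : (φ ⟨s - 1, by omega⟩).val = s.val - 1 := hfix _ (by simp only; omega)
  have hnext : (φ ⟨s + 1, hsm⟩).val = s.val + 1 := hfix _ le_rfl
  refine ⟨hadj, fun h => hts ?_, fun h => hst ?_⟩ <;>
    rw [Fin.eq_add_one_iff_val] at h ⊢
  · obtain rfl : t = ⟨s + 1, hsm⟩ := hφ (Fin.ext (by omega))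
    exact Or.inl rfl
  · have ht : t = ⟨s - 1, by omega⟩ := hφ (Fin.ext (by omega))
    exact Or.inl (by simp only [ht]; omega)

theorem nonempty_cycleGraph_embedding_of_forall_not_isChord {m : ℕ} {x : Fin (m + 2) → V}
    (hinj : Function.Injective x) (hcyc : ∀ i, G.Adj (x i) (x (i + 1)))
    (hno : ∀ i j, ¬ G.IsChord x i j) : Nonempty (cycleGraph (m + 2) ↪g G) := by
  refine ⟨⟨⟨x, hinj⟩, fun {a b} => ?_⟩⟩
  simp only [Function.Embedding.coeFn_mk, cycleGraph_adj, sub_eq_iff_eq_add']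
  constructor
  · intro h
    by_contra! hne
    exact hno a b ⟨h, hne.2, hne.1⟩
  · rintro (rfl | rfl)
    exacts [(hcyc b).symm, hcyc a]

end SimpleGraph

open SimpleGraph

namespace IsKChordal

variable {V : Type*} {G : SimpleGraph V} {k : ℕ}

theorem exists_isChord (hG : IsKChordal G k) {n : ℕ} [NeZero n] (hn : 3 ≤ n) (hkn : k < n)
    {x : Fin n → V} (hinj : Function.Injective x) (hcyc : ∀ i, G.Adj (x i) (x (i + 1))) :
    ∃ i j, G.IsChord x i j := by
  by_contra! h
  obtain ⟨m, rfl⟩ : ∃ m, n = m + 2 := ⟨n - 2, by omega⟩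
  exact (hG (m + 2) (by omega) hkn).false
    (nonempty_cycleGraph_embedding_of_forall_not_isChord hinj hcyc h).some

theorem adj_of_chords_avoid_segment (hG : IsKChordal G k) (hk : 2 ≤ k) (n : ℕ) [hn : NeZero n]
    (hkn : k < n) (x : Fin n → V) (hinj : Function.Injective x)
    (hcyc : ∀ i, G.Adj (x i) (x (i + 1)))
    (hno : ∀ i j, G.IsChord x i j → ¬ (1 ≤ i.val ∧ i.val ≤ k - 2)) :
    G.Adj (x 0) (x ⟨k - 1, by omega⟩) := by
  induction n using Nat.strong_induction_on generalizing hn with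
  | _ n ih =>
  have hshort : ∀ a c, k - 1 ≤ a → a + 2 ≤ c → (hcn : c ≤ n) → k + c ≤ n + a →
      G.Adj (x (Fin.ofNat n a)) (x (Fin.ofNat n c)) → G.Adj (x 0) (x ⟨k - 1, by omega⟩) := by
    intro a c hka hac hcn hm hchord
    have hfix : ∀ u, u.val ≤ a → (Fin.skipArc a c (by omega) hcn u).val = u.val :=
      fun u hu => by simp [Fin.val_skipArc, hu]
    have hsub := ih (n - c + a + 1) (by omega) (by omega) (x ∘ Fin.skipArc a c (by omega) hcn)
      (hinj.comp Fin.skipArc_injective) (adj_comp_skipArc hcyc hchord) fun s t hst hs =>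
        hno _ _ (hst.of_comp Fin.skipArc_injective (by omega) (by omega)
          fun u hu => hfix u (by omega)) (by rwa [hfix s (by omega)])
    simp only [Function.comp_apply] at hsub
    convert hsub using 3
    · ext
      exact (hfix 0 (by simp)).symm
    · exact (hfix ⟨k - 1, by omega⟩ hka).symm
  obtain ⟨i, j, hij⟩ := hG.exists_isChord (by omega) hkn hinj hcyc
  wlog hlt : i.val < j.val generalizing i j
  · have hne : i ≠ j := fun h => hij.1.ne (congrArg x h)
    exact this j i hij.symm (by have := Fin.val_ne_of_ne hne; omega)
  have hi := hno i j hij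
  have hj := hno j i hij.symm
  obtain ⟨hadj, hji, hij'⟩ := hij
  rw [Ne, Fin.eq_add_one_iff_val] at hji hij'
  rcases (by omega : i.val = 0 ∧ j.val = k - 1 ∨ i.val = 0 ∧ k ≤ j.val ∨ k - 1 ≤ i.val)
    with h | h | h
  · convert hadj using 2 <;> ext <;> simp [h]
  · refine hshort j n (by omega) (by omega) le_rfl (by omega) ?_
    convert hadj.symm using 2 <;> ext <;> simp [h]
  · refine hshort i j h (by omega) j.isLt.le (by omega) ?_
    simpa using hadj

end IsKChordal

/-- Let `G` be `k`-chordal (`k ≥ 3`) and let `x 0, x 1, …, x (n-1)` (`n ≥ k + 1`) be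
pairwise distinct vertices forming a cycle (here `x i` represents the vertex
`x_{i+1}` of the 1-based statement, and indices are taken cyclically in `Fin n`).
If no chord of the cycle has an endpoint among `x 1, …, x (k-2)`
(1-based: `x₂, …, x_{k-1}`), then `x 0` and `x (k-1)` (1-based: `x₁` and `x_k`)
are adjacent. -/
theorem adj_of_no_chord_in_segment {V : Type*} (G : SimpleGraph V)
    (k : ℕ) (hk : 3 ≤ k) (hchord : IsKChordal G k)
    (n : ℕ) [NeZero n] (hn : k + 1 ≤ n) (x : Fin n → V)
    (hinj : Function.Injective x)
    (hcyc : ∀ i : Fin n, G.Adj (x i) (x (i + 1)))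
    (hnochord : ∀ i j : Fin n, G.Adj (x i) (x j) → j ≠ i + 1 → i ≠ j + 1 →
      ¬ (1 ≤ (i : ℕ) ∧ (i : ℕ) ≤ k - 2)) :
    G.Adj (x 0) (x ⟨k - 1, by omega⟩) :=
  hchord.adj_of_chords_avoid_segment (by omega) n hn x hinj hcyc fun i j h =>
    hnochord i j h.1 h.2.1 h.2.2
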